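/- arXiv:2009.04821 — 2 statements merged into one kernel-verified Lean document; each statement's English description precedes it below -/
import Mathlib

section
/- Given an ILPDC C and an ILFST T, there exists an ILPDC N such that for all binary strings x, N(x) = C(T(x)); moreover if C is an ILUPDC then N can be taken to be an ILUPDC. -/
/-- A finite-state transducer with `n` states. -/
structure FST where
  n : ℕ
  pos : 0 < n
  q0 : Fin n
  δ : Fin n → Bool → Fin n
  ν : Fin n → Bool → List Bool

def FST.runFrom (T : FST) : Fin T.n → List Bool → Fin T.n × List Bool
  | q, [] => (q, [])
  | q, b :: x =>
    let r := T.runFrom (T.δ q b) x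
    (r.1, T.ν q b ++ r.2)

/-- The output of the transducer on input `x`. -/
def FST.output (T : FST) (x : List Bool) : List Bool := (T.runFrom T.q0 x).2

/-- The state reached after reading `x`. -/
def FST.finalState (T : FST) (x : List Bool) : Fin T.n := (T.runFrom T.q0 x).1

/-- Information losslessness: the pair (output, final state) identifies the input. -/
def FST.IL (T : FST) : Prop :=
  Function.Injective fun x => (T.output x, T.finalState x)

/-- A (bounded) pushdown compressor. Stack symbols are `Bool` (`false` = `0`),
with the bottom-of-stack marker `z₀` represented implicitly: the stack is a
`List Bool` and an empty list means the stack holds only `z₀` (top symbol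
`none`).  A transition `δ q b a = some (q', w)` reads bit `b` with top stack
symbol `a`, pops it (if `a ≠ none`; `z₀` is never popped), pushes the word `w`
and moves to `q'`.  `dLam` gives λ-transitions, which pop the top symbol
without reading input; at most `c` of them happen consecutively. -/
structure PDC where
  n : ℕ
  pos : 0 < n
  q0 : Fin n
  c : ℕ
  δ : Fin n → Bool → Option Bool → Option (Fin n × List Bool)
  dLam : Fin n → Bool → Option (Fin n)
  ν : Fin n → Bool → Option Bool → List Bool

def PDC.lamSteps (M : PDC) : ℕ → Fin M.n → List Bool → Fin M.n × List Bool
  | 0, q, s => (q, s)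
  | fuel + 1, q, s =>
    match s with
    | [] => (q, [])
    | a :: rest =>
      match M.dLam q a with
      | none => (q, a :: rest)
      | some q' => M.lamSteps fuel q' rest

def PDC.readBit (M : PDC) (q : Fin M.n) (s : List Bool) (b : Bool) :
    Option (Fin M.n × List Bool × List Bool) :=
  let p := M.lamSteps M.c q s
  match p.2 with
  | [] => (M.δ p.1 b none).map fun r => (r.1, r.2, M.ν p.1 b none)
  | a :: rest => (M.δ p.1 b (some a)).map fun r => (r.1, r.2 ++ rest, M.ν p.1 b (some a))

/-- Run the compressor from state `q` with stack contents `s` on input `x`,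
returning (final state, final stack, output), or `none` if undefined. -/
def PDC.run (M : PDC) : Fin M.n → List Bool → List Bool → Option (Fin M.n × List Bool × List Bool)
  | q, s, [] => some (q, s, [])
  | q, s, b :: x =>
    match M.readBit q s b with
    | none => none
    | some r => (M.run r.1 r.2.1 x).map fun r' => (r'.1, r'.2.1, r.2.2 ++ r'.2.2)

/-- The output of the compressor on input `x` (from the start configuration). -/
def PDC.output (M : PDC) (x : List Bool) : List Bool :=
  ((M.run M.q0 [] x).map fun r => r.2.2).getD []

/-- Information losslessness: the compressor is total and the pair
(final state, output) uniquely identifies the input. -/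
def PDC.IL (M : PDC) : Prop :=
  (∀ x, (M.run M.q0 [] x).isSome) ∧
  Function.Injective fun x => (M.run M.q0 [] x).map fun r => (r.1, r.2.2)

/-- Unary-stack pushdown compressors only ever push the symbol `0` (stack
alphabet `{0, z₀}`). -/
def PDC.UnaryStack (M : PDC) : Prop :=
  ∀ q b a r, M.δ q b a = some r → ∀ s ∈ r.2, s = false

/-!
`N` runs `T` and feeds each output block `T.ν q b` (of length at most `d = T.maxOutput`) to `C`.
On one block `C` makes at most `(C.c + 1) * d` pops, so before each input bit `N` pops that many
stack symbols into its finite control by λ-transitions; `C` is then simulated on this buffer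
together with the symbol now on top, which by `PDC.run_append_stack` is faithful to the whole
stack. From the final state and output of `N` one reads off those of `C`, hence `T x` since `C` is
information lossless, and the final state of `T`, hence `x` since `T` is.
-/

namespace PDC

variable (M : PDC)

theorem run_append (q : Fin M.n) (s u v : List Bool) :
    M.run q s (u ++ v) =
      (M.run q s u).bind fun r =>
        (M.run r.1 r.2.1 v).map fun r' => (r'.1, r'.2.1, r.2.2 ++ r'.2.2) := by
  induction u generalizing q s with
  | nil => cases M.run q s v <;> simp [PDC.run]
  | cons b u ih =>
    simp only [List.cons_append, PDC.run]
    cases M.readBit q s b with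
    | none => rfl
    | some r =>
      simp only [ih]
      cases M.run r.1 r.2.1 u with
      | none => rfl
      | some r₁ => cases M.run r₁.1 r₁.2.1 v <;> simp [Function.comp_def]

theorem lamSteps_suffix (k : ℕ) (q : Fin M.n) (s : List Bool) :
    (M.lamSteps k q s).2 <:+ s := by
  induction k generalizing q s with
  | zero => exact List.suffix_refl s
  | succ k ih =>
    rcases s with _ | ⟨a, s⟩
    · exact List.suffix_refl _
    · simp only [PDC.lamSteps]
      cases M.dLam q a with
      | none => exact List.suffix_refl _
      | some q' => exact (ih q' s).trans (List.suffix_cons a s)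

theorem length_le_lamSteps_add (k : ℕ) (q : Fin M.n) (s : List Bool) :
    s.length ≤ (M.lamSteps k q s).2.length + k := by
  induction k generalizing q s with
  | zero => simp [PDC.lamSteps]
  | succ k ih =>
    rcases s with _ | ⟨a, s⟩
    · simp [PDC.lamSteps]
    · simp only [PDC.lamSteps]
      cases M.dLam q a with
      | none => simp
      | some q' => have := ih q' s; simp only [List.length_cons]; omega

theorem lamSteps_append {k : ℕ} {s : List Bool} (hk : k < s.length) (q : Fin M.n)
    (t : List Bool) :
    M.lamSteps k q (s ++ t) = ((M.lamSteps k q s).1, (M.lamSteps k q s).2 ++ t) := by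
  induction k generalizing q s with
  | zero => rfl
  | succ k ih =>
    rcases s with _ | ⟨a, s⟩
    · simp at hk
    · simp only [List.cons_append, PDC.lamSteps]
      cases M.dLam q a with
      | none => rfl
      | some q' => exact ih (by simp only [List.length_cons] at hk; omega) q'

theorem length_le_of_readBit {q : Fin M.n} {s : List Bool} {b : Bool}
    {r : Fin M.n × List Bool × List Bool} (h : M.readBit q s b = some r) :
    s.length ≤ r.2.1.length + (M.c + 1) := by
  have hlen := M.length_le_lamSteps_add M.c q s
  rw [PDC.readBit] at h
  generalize (M.lamSteps M.c q s).2 = st at h hlen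
  rcases st with _ | ⟨a, rest⟩
  · simp only [List.length_nil] at hlen; omega
  · obtain ⟨w, -, rfl⟩ := Option.map_eq_some_iff.mp h
    simp only [List.length_cons, List.length_append] at hlen ⊢
    omega

theorem readBit_append {s : List Bool} (hs : M.c < s.length) (q : Fin M.n) (t : List Bool)
    (b : Bool) :
    M.readBit q (s ++ t) b = (M.readBit q s b).map fun r => (r.1, r.2.1 ++ t, r.2.2) := by
  have hlen := M.length_le_lamSteps_add M.c q s
  simp only [PDC.readBit, M.lamSteps_append hs]
  generalize (M.lamSteps M.c q s).2 = st at hlen ⊢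
  rcases st with _ | ⟨a, rest⟩
  · simp only [List.length_nil] at hlen; omega
  · simp [Option.map_map, Function.comp_def]

theorem run_append_stack {s : List Bool} {x : List Bool} (hs : (M.c + 1) * x.length < s.length)
    (q : Fin M.n) (t : List Bool) :
    M.run q (s ++ t) x = (M.run q s x).map fun r => (r.1, r.2.1 ++ t, r.2.2) := by
  induction x generalizing q s with
  | nil => rfl
  | cons b x ih =>
    simp only [PDC.run, M.readBit_append (by simp only [List.length_cons] at hs; nlinarith) q t b]
    cases hr : M.readBit q s b with
    | none => rfl
    | some r =>
      have hlen := M.length_le_of_readBit hr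
      simp only [List.length_cons] at hs
      simp only [Option.map_some, ih (s := r.2.1) (by nlinarith), Option.map_map]
      rfl

def PreservesStack (P : Bool → Prop) : Prop :=
  ∀ q s b r, (∀ z ∈ s, P z) → M.readBit q s b = some r → ∀ z ∈ r.2.1, P z

theorem PreservesStack.run {M : PDC} {P : Bool → Prop} (hM : M.PreservesStack P)
    {q : Fin M.n} {s x : List Bool} {r : Fin M.n × List Bool × List Bool}
    (hs : ∀ z ∈ s, P z) (h : M.run q s x = some r) : ∀ z ∈ r.2.1, P z := by
  induction x generalizing q s r with
  | nil => cases h; exact hs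
  | cons b x ih =>
    rw [PDC.run] at h
    cases hr : M.readBit q s b with
    | none => simp [hr] at h
    | some r₁ =>
      simp only [hr] at h
      obtain ⟨r₂, h₂, rfl⟩ := Option.map_eq_some_iff.mp h
      exact ih (r := r₂) (hM q s b r₁ hs hr) h₂

theorem PreservesStack.map_eq_of_run {M : PDC} {f : Bool → Bool}
    (hM : M.PreservesStack fun z => z = f z) {q : Fin M.n} {s x : List Bool}
    {r : Fin M.n × List Bool × List Bool} (hs : ∀ z ∈ s, z = f z) (h : M.run q s x = some r) :
    r.2.1.map f = r.2.1 :=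
  (List.map_congr_left fun z hz => (hM.run hs h z hz).symm).trans (List.map_id _)

theorem UnaryStack.preservesStack {M : PDC} (hM : M.UnaryStack) :
    M.PreservesStack (· = false) := by
  intro q s b r hs h
  rw [PDC.readBit] at h
  have hsuf := M.lamSteps_suffix M.c q s
  generalize (M.lamSteps M.c q s).2 = st at h hsuf
  rcases st with _ | ⟨a, rest⟩
  · obtain ⟨w, hw, rfl⟩ := Option.map_eq_some_iff.mp h
    exact hM _ _ _ _ hw
  · obtain ⟨w, hw, rfl⟩ := Option.map_eq_some_iff.mp h
    intro z hz
    rcases List.mem_append.mp hz with hz | hz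
    · exact hM _ _ _ _ hw z hz
    · exact hs z (hsuf.subset (List.mem_cons_of_mem a hz))

end PDC

namespace FST

def maxOutput (T : FST) : ℕ := Finset.univ.sup fun p : Fin T.n × Bool => (T.ν p.1 p.2).length

theorem length_ν_le_maxOutput (T : FST) (q : Fin T.n) (b : Bool) :
    (T.ν q b).length ≤ T.maxOutput :=
  Finset.le_sup (f := fun p : Fin T.n × Bool => (T.ν p.1 p.2).length) (Finset.mem_univ (q, b))

end FST

namespace PDC.CompFST

variable (C : PDC) (T : FST)

def bufferSize : ℕ := (C.c + 1) * T.maxOutput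

abbrev State : Type := Fin T.n × Fin C.n × {l : List Bool // l.length ≤ bufferSize C T}

instance : Finite (State C T) :=
  haveI : Finite {l : List Bool // l.length ≤ bufferSize C T} :=
    (List.finite_length_le Bool _).to_subtype
  inferInstance

instance : Nonempty (State C T) := ⟨(T.q0, C.q0, ⟨[], Nat.zero_le _⟩)⟩

noncomputable def encode : State C T ≃ Fin (Nat.card (State C T)) := Finite.equivFin _

/-- Buffers longer than `bufferSize` are truncated; they never arise. -/
noncomputable def state (qT : Fin T.n) (qC : Fin C.n) (buf : List Bool) :
    Fin (Nat.card (State C T)) :=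
  encode C T (qT, qC, ⟨buf.take (bufferSize C T), List.length_take_le _ _⟩)

noncomputable def simulate (p : State C T) (b : Bool) (a : Option Bool) :
    Option (Fin C.n × List Bool × List Bool) :=
  C.run p.2.1 (p.2.2.1 ++ a.toList) (T.ν p.1 b)

end PDC.CompFST

open PDC.CompFST in
/-- Every pushed word is relabelled by `f`: `f = id` is the plain simulation, and the constant
`false` gives a unary-stack machine, still faithful when `C` is unary-stack. -/
noncomputable def PDC.compFST (C : PDC) (T : FST) (f : Bool → Bool) : PDC where
  n := Nat.card (State C T)
  pos := Nat.card_pos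
  q0 := state C T T.q0 C.q0 []
  c := bufferSize C T
  dLam q a :=
    let p := (encode C T).symm q
    if p.2.2.1.length < bufferSize C T then some (state C T p.1 p.2.1 (p.2.2.1 ++ [a])) else none
  δ q b a :=
    let p := (encode C T).symm q
    (simulate C T p b a).map fun r => (state C T (T.δ p.1 b) r.1 [], r.2.1.map f)
  ν q b a := ((simulate C T ((encode C T).symm q) b a).map (·.2.2)).getD []

namespace PDC.CompFST

variable {C : PDC} {T : FST} {f : Bool → Bool}

theorem encode_symm_state {buf : List Bool} (h : buf.length ≤ bufferSize C T) (qT : Fin T.n)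
    (qC : Fin C.n) : (encode C T).symm (state C T qT qC buf) = (qT, qC, ⟨buf, h⟩) := by
  simp [state, List.take_of_length_le h]

theorem state_nil_injective {qT qT' : Fin T.n} {qC qC' : Fin C.n}
    (h : state C T qT qC [] = state C T qT' qC' []) : qT = qT' ∧ qC = qC' := by
  simpa [state] using h

theorem dLam_state {buf : List Bool} (h : buf.length < bufferSize C T) (qT : Fin T.n)
    (qC : Fin C.n) (a : Bool) :
    (compFST C T f).dLam (state C T qT qC buf) a = some (state C T qT qC (buf ++ [a])) := by
  simp [compFST, encode_symm_state h.le, h]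

theorem δ_state {buf : List Bool} (h : buf.length ≤ bufferSize C T) (qT : Fin T.n)
    (qC : Fin C.n) (b : Bool) (a : Option Bool) :
    (compFST C T f).δ (state C T qT qC buf) b a =
      (C.run qC (buf ++ a.toList) (T.ν qT b)).map
        fun r => (state C T (T.δ qT b) r.1 [], r.2.1.map f) := by
  simp [compFST, encode_symm_state h, simulate]

theorem ν_state {buf : List Bool} (h : buf.length ≤ bufferSize C T) (qT : Fin T.n)
    (qC : Fin C.n) (b : Bool) (a : Option Bool) :
    (compFST C T f).ν (state C T qT qC buf) b a =
      ((C.run qC (buf ++ a.toList) (T.ν qT b)).map (·.2.2)).getD [] := by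
  simp [compFST, encode_symm_state h, simulate]

theorem lamSteps_state {k : ℕ} {buf : List Bool} (h : buf.length + k ≤ bufferSize C T)
    (qT : Fin T.n) (qC : Fin C.n) (S : List Bool) :
    (compFST C T f).lamSteps k (state C T qT qC buf) S =
      (state C T qT qC (buf ++ S.take k), S.drop k) := by
  induction k generalizing buf S with
  | zero => simp only [PDC.lamSteps, List.take_zero, List.append_nil, List.drop_zero]; rfl
  | succ k ih =>
    rcases S with _ | ⟨a, S⟩
    · simp only [PDC.lamSteps, List.take_nil, List.append_nil, List.drop_nil]; rfl
    · have hbuf : (buf ++ [a]).length + k ≤ bufferSize C T := by simp; omega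
      have hlt : buf.length < bufferSize C T := by omega
      simp only [PDC.lamSteps, dLam_state (f := f) hlt, ih hbuf,
        List.take_succ_cons, List.drop_succ_cons, List.append_assoc, List.singleton_append]
      rfl

theorem mul_length_ν_lt_bufferSize_succ (qT : Fin T.n) (b : Bool) :
    (C.c + 1) * (T.ν qT b).length < bufferSize C T + 1 :=
  Nat.lt_succ_of_le (Nat.mul_le_mul_left _ (T.length_ν_le_maxOutput qT b))

theorem readBit_state (hC : C.PreservesStack fun z => z = f z) {S : List Bool}
    (hS : ∀ z ∈ S, z = f z) (qT : Fin T.n) (qC : Fin C.n) (b : Bool) :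
    (compFST C T f).readBit (state C T qT qC []) S b =
      (C.run qC S (T.ν qT b)).map fun r => (state C T (T.δ qT b) r.1 [], r.2.1, r.2.2) := by
  set m := bufferSize C T
  have hm : (compFST C T f).c = m := rfl
  have htake : (S.take m).length ≤ m := List.length_take_le _ _
  simp only [PDC.readBit, hm, lamSteps_state (by simp : [].length + m ≤ m), List.nil_append]
  obtain hd | ⟨a, rest, hd⟩ : S.drop m = [] ∨ ∃ a rest, S.drop m = a :: rest := by
    cases S.drop m <;> simp
  · have hS' : S.take m = S := List.take_of_length_le (List.drop_eq_nil_iff.mp hd)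
    rw [hd, δ_state htake, ν_state htake, hS']
    simp only [Option.toList_none, List.append_nil]
    cases hr : C.run qC S (T.ν qT b) with
    | none => rfl
    | some r => simp only [Option.map_some, Option.getD_some, hC.map_eq_of_run hS hr]; rfl
  · have hsplit : S = (S.take m ++ [a]) ++ rest := by
      rw [List.append_assoc, List.singleton_append, ← hd, List.take_append_drop]
    have hlen : (C.c + 1) * (T.ν qT b).length < (S.take m ++ [a]).length := by
      have hSm : m < S.length := by
        have := congrArg List.length hd
        simp only [List.length_drop, List.length_cons] at this
        omega
      rw [List.length_append, List.length_take, List.length_singleton, min_eq_left hSm.le]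
      exact mul_length_ν_lt_bufferSize_succ qT b
    have hS₀ : ∀ z ∈ S.take m ++ [a], z = f z := fun z hz =>
      hS z (List.IsPrefix.subset ⟨rest, hsplit.symm⟩ hz)
    rw [hd]
    simp only [δ_state htake, ν_state htake, Option.toList_some]
    conv_rhs => rw [hsplit, C.run_append_stack hlen]
    cases hr : C.run qC (S.take m ++ [a]) (T.ν qT b) with
    | none => rfl
    | some r =>
      simp only [Option.map_some, Option.getD_some, hC.map_eq_of_run hS₀ hr]
      rfl

theorem run_state (hC : C.PreservesStack fun z => z = f z) (x : List Bool) (qT : Fin T.n)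
    (qC : Fin C.n) {S : List Bool} (hS : ∀ z ∈ S, z = f z) :
    (compFST C T f).run (state C T qT qC []) S x =
      (C.run qC S (T.runFrom qT x).2).map
        fun r => (state C T (T.runFrom qT x).1 r.1 [], r.2.1, r.2.2) := by
  induction x generalizing qT qC S with
  | nil => rfl
  | cons b x ih =>
    simp only [FST.runFrom, C.run_append, PDC.run, readBit_state hC hS]
    cases hr : C.run qC S (T.ν qT b) with
    | none => rfl
    | some r =>
      simp only [Option.map_some, Option.bind_some, ih _ _ (hC.run hS hr)]
      cases C.run r.1 r.2.1 (T.runFrom (T.δ qT b) x).2 <;> rfl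

end PDC.CompFST

namespace PDC

open CompFST

variable {C : PDC} {T : FST} {f : Bool → Bool}

theorem run_compFST (hC : C.PreservesStack fun z => z = f z) (x : List Bool) :
    (compFST C T f).run (compFST C T f).q0 [] x =
      (C.run C.q0 [] (T.output x)).map
        fun r => (state C T (T.finalState x) r.1 [], r.2.1, r.2.2) :=
  run_state hC x T.q0 C.q0 (by simp)

theorem output_compFST (hC : C.PreservesStack fun z => z = f z) (x : List Bool) :
    (compFST C T f).output x = C.output (T.output x) := by
  simp only [PDC.output, run_compFST hC]
  cases C.run C.q0 [] (T.output x) <;> rfl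

theorem IL.compFST (hC : C.IL) (hT : T.IL) (hCf : C.PreservesStack fun z => z = f z) :
    (compFST C T f).IL := by
  have hrun : ∀ x, ∃ r, C.run C.q0 [] (T.output x) = some r ∧
      (C.compFST T f).run (C.compFST T f).q0 [] x =
        some (state C T (T.finalState x) r.1 [], r.2.1, r.2.2) := fun x => by
    obtain ⟨r, hr⟩ := Option.isSome_iff_exists.mp (hC.1 (T.output x))
    exact ⟨r, hr, by rw [run_compFST hCf, hr]; rfl⟩
  refine ⟨fun x => ?_, fun x y hxy => ?_⟩
  · obtain ⟨r, -, hr⟩ := hrun x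
    rw [hr]
    rfl
  obtain ⟨rx, hrx, hNx⟩ := hrun x
  obtain ⟨ry, hry, hNy⟩ := hrun y
  simp only [hNx, hNy] at hxy
  obtain ⟨hst, hout : rx.2.2 = ry.2.2⟩ := Prod.mk.inj (Option.some.inj hxy)
  obtain ⟨hfin, hq⟩ := state_nil_injective hst
  have hTout : T.output x = T.output y :=
    hC.2 (by simp only [hrx, hry, Option.map_some, hq, hout])
  exact hT (Prod.ext hTout hfin)

theorem unaryStack_compFST_const_false : (compFST C T fun _ => false).UnaryStack := by
  intro q b a r hδ z hz
  obtain ⟨r', -, rfl⟩ := Option.map_eq_some_iff.mp hδ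
  obtain ⟨z', -, rfl⟩ := List.mem_map.mp hz
  rfl

end PDC

/-- Composition of an ILPDC with an ILFST is computable by an ILPDC; moreover
if the compressor is unary-stack, so is the composition. -/
theorem ilpdc_comp_ilfst (C : PDC) (T : FST) (hC : C.IL) (hT : T.IL) :
    (∃ N : PDC, N.IL ∧ ∀ x : List Bool, N.output x = C.output (T.output x)) ∧
    (C.UnaryStack →
      ∃ N : PDC, N.IL ∧ N.UnaryStack ∧
        ∀ x : List Bool, N.output x = C.output (T.output x)) := by
  have hid : C.PreservesStack fun z => z = id z := fun _ _ _ _ _ _ _ _ => rfl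
  refine ⟨⟨C.compFST T id, hC.compFST hT hid, PDC.output_compFST hid⟩, fun hCu => ?_⟩
  have hzero : C.PreservesStack fun z => z = (fun _ => false) z := hCu.preservesStack
  exact ⟨C.compFST T fun _ => false, hC.compFST hT hzero, PDC.unaryStack_compFST_const_false,
    PDC.output_compFST hzero⟩
end

section
/- For every ε > 0 and every k ∈ ℕ there exists k' ∈ ℕ such that for all but finitely many binary strings x and all binary strings y: D^{k'}(xy) ≤ (1+ε)·D^k(x) + D^k(y) + 2. -/
/-- A binary representation of finite-state transducers: a partial map from
binary strings onto the set of all FSTs (surjectivity). -/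
def IsRep (σ : List Bool → Option FST) : Prop := ∀ T : FST, ∃ x, σ x = some T

/-- `T` has a `σ`-description of length at most `k`. -/
def sizeLE (σ : List Bool → Option FST) (T : FST) (k : ℕ) : Prop :=
  ∃ x : List Bool, x.length ≤ k ∧ σ x = some T

/-!
Encode a program `p` for `x` by a self-delimiting block code: blocks of `b + 1` bits, each
preceded by a marker `1`, then the final short block preceded by `0`, with its bits doubled and
closed by `01`. A transducer built from `A` and `B` decodes this code while simulating `A` and
switches to `B` at the terminator, so it maps the code of `p` followed by `q` to `x ++ y`.
For `b ≥ 2 / ε` the markers cost at most `(ε / 2)|p|` bits, and the final block at most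
`b + 3 ≤ (ε / 2)|p| + 2` bits once `|p| ≥ 2(b + 1) / ε`. Only finitely many transducers have
descriptions of size `≤ k`, so only finitely many `x` have shorter programs, and the combined
machines have descriptions of bounded size `k'`.
-/

structure Transducer (S : Type) where
  q0 : S
  δ : S → Bool → S
  ν : S → Bool → List Bool

namespace Transducer

variable {S : Type}

def runFrom (T : Transducer S) : S → List Bool → S × List Bool
  | q, [] => (q, [])
  | q, b :: x =>
    let r := T.runFrom (T.δ q b) x
    (r.1, T.ν q b ++ r.2)

theorem runFrom_append (T : Transducer S) (s : S) (u v : List Bool) :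
    T.runFrom s (u ++ v) =
      ((T.runFrom (T.runFrom s u).1 v).1,
        (T.runFrom s u).2 ++ (T.runFrom (T.runFrom s u).1 v).2) := by
  induction u generalizing s with
  | nil => simp [runFrom]
  | cons c u ih => simp [runFrom, ih]

variable [Fintype S]

noncomputable def toFST (T : Transducer S) : FST where
  n := Fintype.card S
  pos := Fintype.card_pos_iff.mpr ⟨T.q0⟩
  q0 := Fintype.equivFin S T.q0
  δ q c := Fintype.equivFin S (T.δ ((Fintype.equivFin S).symm q) c)
  ν q c := T.ν ((Fintype.equivFin S).symm q) c

theorem toFST_runFrom (T : Transducer S) (s : S) (x : List Bool) :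
    T.toFST.runFrom (Fintype.equivFin S s) x =
      (Fintype.equivFin S (T.runFrom s x).1, (T.runFrom s x).2) := by
  induction x generalizing s with
  | nil => rfl
  | cons c x ih =>
    have hδ : T.toFST.δ (Fintype.equivFin S s) c = Fintype.equivFin S (T.δ s c) := by
      simp [toFST]
    have hν : T.toFST.ν (Fintype.equivFin S s) c = T.ν s c := by simp [toFST]
    simp only [FST.runFrom, runFrom, hδ, hν, ih]
    rfl

theorem toFST_output (T : Transducer S) (x : List Bool) :
    T.toFST.output x = (T.runFrom T.q0 x).2 :=
  congrArg Prod.snd (T.toFST_runFrom T.q0 x)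

end Transducer

theorem FST.runFrom_append (T : FST) (s : Fin T.n) (u v : List Bool) :
    T.runFrom s (u ++ v) =
      ((T.runFrom (T.runFrom s u).1 v).1,
        (T.runFrom s u).2 ++ (T.runFrom (T.runFrom s u).1 v).2) := by
  induction u generalizing s with
  | nil => simp [FST.runFrom]
  | cons c u ih => simp [FST.runFrom, ih]

theorem finite_setOf_sizeLE (σ : List Bool → Option FST) (k : ℕ) :
    {T | sizeLE σ T k}.Finite := by
  refine (((List.finite_length_le Bool k).image σ).preimage
    (Option.some_injective FST).injOn).subset ?_
  rintro T ⟨x, hx, hσx⟩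
  exact ⟨x, hx, hσx⟩

theorem IsRep.exists_sizeLE_of_finite {σ : List Bool → Option FST} (hσ : IsRep σ)
    {S : Set FST} (hS : S.Finite) : ∃ k, ∀ T ∈ S, sizeLE σ T k := by
  choose d hd using hσ
  obtain ⟨k, hk⟩ := (hS.image fun T => (d T).length).bddAbove
  exact ⟨k, fun T hT => ⟨d T, hk ⟨T, hT, rfl⟩, hd T⟩⟩

theorem eventually_le_length_of_output_eq {S : Set FST} (hS : S.Finite) (N : ℕ) :
    ∀ᶠ x in Filter.cofinite, ∀ T ∈ S, ∀ p, T.output p = x → N ≤ p.length := by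
  rw [Filter.eventually_cofinite]
  refine (hS.biUnion fun T _ => (List.finite_length_lt Bool N).image T.output).subset ?_
  intro x hx
  push Not at hx
  obtain ⟨T, hT, p, rfl, hp⟩ := hx
  exact Set.mem_biUnion hT ⟨p, hp, rfl⟩

def blockEncode (b : ℕ) (p : List Bool) : List Bool :=
  if b + 1 ≤ p.length then
    true :: (p.take (b + 1) ++ blockEncode b (p.drop (b + 1)))
  else
    false :: (p.flatMap (fun c => [c, c]) ++ [false, true])
termination_by p.length
decreasing_by simp; omega

theorem length_blockEncode_le (b : ℕ) (p : List Bool) :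
    (blockEncode b p).length ≤ p.length + p.length / (b + 1) + (b + 3) := by
  rw [blockEncode]
  split_ifs with h
  · have ih := length_blockEncode_le b (p.drop (b + 1))
    have hdiv : p.length / (b + 1) = (p.length - (b + 1)) / (b + 1) + 1 :=
      Nat.div_eq_sub_div (by omega) h
    simp only [List.length_cons, List.length_append, List.length_take, List.length_drop] at ih ⊢
    omega
  · simp only [List.length_cons, List.length_append, List.length_flatMap, List.length_nil,
      List.map_const', List.sum_replicate, smul_eq_mul]
    generalize p.length / (b + 1) = d
    omega
termination_by p.length
decreasing_by simp; omega

theorem length_blockEncode_le_one_add_mul {ε : ℝ} (hε : 0 < ε) {b : ℕ} (hb : 2 / ε ≤ b)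
    {p : List Bool} (hp : 2 * (b + 1) / ε ≤ p.length) :
    ((blockEncode b p).length : ℝ) ≤ (1 + ε) * p.length + 2 := by
  have hmarkers : ((p.length / (b + 1) : ℕ) : ℝ) ≤ ε / 2 * p.length :=
    calc ((p.length / (b + 1) : ℕ) : ℝ) ≤ p.length / (b + 1) := by
          exact_mod_cast Nat.cast_div_le
      _ ≤ p.length / (2 / ε) := by gcongr; linarith
      _ = ε / 2 * p.length := by field_simp
  have htail : (b : ℝ) + 1 ≤ ε / 2 * p.length := by
    rw [div_le_iff₀ hε] at hp
    linarith
  have hlen : ((blockEncode b p).length : ℝ) ≤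
      p.length + (p.length / (b + 1) : ℕ) + (b + 3) := by
    exact_mod_cast length_blockEncode_le b p
  linarith

/-- `inl (a, inl none)`: expecting a marker; `inl (a, inl (some j))`: inside a block, `j + 1`
bits left; `inl (a, inr none)`: in the final block, at a pair boundary; `inl (a, inr (some d))`:
first bit `d` of a pair read; `inr t`: simulating `B`. Here `a`, `t` are states of `A`, `B`. -/
abbrev ConcatState (b : ℕ) (A B : FST) : Type :=
  (Fin A.n × (Option (Fin (b + 1)) ⊕ Option Bool)) ⊕ Fin B.n

def concatMachine (b : ℕ) (A B : FST) : Transducer (ConcatState b A B) where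
  q0 := .inl (A.q0, .inl none)
  δ
    | .inr t, c => .inr (B.δ t c)
    | .inl (a, .inl none), c =>
        if c then .inl (a, .inl (some (Fin.last b))) else .inl (a, .inr none)
    | .inl (a, .inl (some j)), c =>
        if j.1 = 0 then .inl (A.δ a c, .inl none)
        else .inl (A.δ a c, .inl (some ⟨j.1 - 1, by omega⟩))
    | .inl (a, .inr none), c => .inl (a, .inr (some c))
    | .inl (a, .inr (some d)), c =>
        if d = false ∧ c = true then .inr B.q0 else .inl (A.δ a d, .inr none)
  ν
    | .inr t, c => B.ν t c
    | .inl (_, .inl none), _ => []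
    | .inl (a, .inl (some _)), c => A.ν a c
    | .inl (_, .inr none), _ => []
    | .inl (a, .inr (some d)), c => if d = false ∧ c = true then [] else A.ν a d

section ConcatMachine

variable {b : ℕ} {A B : FST}

theorem concatMachine_runFrom_block (a : Fin A.n) (j : ℕ) (hj : j ≤ b) (u : List Bool)
    (hu : u.length = j + 1) :
    (concatMachine b A B).runFrom (.inl (a, .inl (some ⟨j, by omega⟩))) u =
      (.inl ((A.runFrom a u).1, .inl none), (A.runFrom a u).2) := by
  induction j generalizing a u with
  | zero =>
    obtain ⟨c, rfl⟩ := List.length_eq_one_iff.mp hu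
    simp [Transducer.runFrom, concatMachine, FST.runFrom]
  | succ j ih =>
    obtain ⟨c, u, rfl⟩ := List.exists_cons_of_length_eq_add_one hu
    simp only [List.length_cons, Nat.add_right_cancel_iff] at hu
    simpa [Transducer.runFrom, concatMachine, FST.runFrom, Prod.ext_iff] using
      ih (A.δ a c) (by omega) u hu

theorem concatMachine_runFrom_doubled (a : Fin A.n) (p : List Bool) :
    (concatMachine b A B).runFrom (.inl (a, .inr none)) (p.flatMap fun c => [c, c]) =
      (.inl ((A.runFrom a p).1, .inr none), (A.runFrom a p).2) := by
  induction p generalizing a with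
  | nil => rfl
  | cons c p ih =>
    cases c <;> simpa [Transducer.runFrom, concatMachine, FST.runFrom, Prod.ext_iff] using ih _

theorem concatMachine_runFrom_inr (t : Fin B.n) (v : List Bool) :
    (concatMachine b A B).runFrom (.inr t) v = (.inr (B.runFrom t v).1, (B.runFrom t v).2) := by
  induction v generalizing t with
  | nil => rfl
  | cons c v ih => simpa [Transducer.runFrom, concatMachine, FST.runFrom, Prod.ext_iff] using ih _

theorem concatMachine_runFrom_blockEncode_append (a : Fin A.n) (p v : List Bool) :
    (concatMachine b A B).runFrom (.inl (a, .inl none)) (blockEncode b p ++ v) =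
      (.inr (B.runFrom B.q0 v).1, (A.runFrom a p).2 ++ (B.runFrom B.q0 v).2) := by
  rw [blockEncode]
  split_ifs with h
  · have hblock := concatMachine_runFrom_block (B := B) a b le_rfl (p.take (b + 1))
      (by simp; omega)
    have ih := concatMachine_runFrom_blockEncode_append (A.runFrom a (p.take (b + 1))).1
      (p.drop (b + 1)) v
    conv_rhs => rw [← List.take_append_drop (b + 1) p, FST.runFrom_append]
    simp only [List.cons_append, List.append_assoc, Transducer.runFrom]
    rw [Transducer.runFrom_append]
    erw [hblock, ih]
    simp [concatMachine]
  · have hdoubled := concatMachine_runFrom_doubled (b := b) (B := B) a p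
    simp only [List.cons_append, List.append_assoc, Transducer.runFrom]
    rw [Transducer.runFrom_append]
    erw [hdoubled]
    simpa [Transducer.runFrom, concatMachine, Prod.ext_iff] using
      concatMachine_runFrom_inr (b := b) (A := A) B.q0 v
termination_by p.length
decreasing_by simp; omega

theorem concatMachine_output (p q : List Bool) :
    (concatMachine b A B).toFST.output (blockEncode b p ++ q) = A.output p ++ B.output q := by
  rw [Transducer.toFST_output]
  exact congrArg Prod.snd (concatMachine_runFrom_blockEncode_append A.q0 p q)

end ConcatMachine

/-- For every `ε > 0` and `k` there is `k'` such that for all but finitely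
many `x` and all `y`: `D^{k'}(xy) ≤ (1+ε)·D^k(x) + D^k(y) + 2`, phrased via
witnessing programs `p` for `x` and `q` for `y`. -/
theorem Dfs_concat_upper (σ : List Bool → Option FST) (hσ : IsRep σ)
    (ε : ℝ) (hε : 0 < ε) (k : ℕ) :
    ∃ k' : ℕ, ∀ᶠ x : List Bool in Filter.cofinite, ∀ y p q : List Bool, ∀ A B : FST,
      sizeLE σ A k → sizeLE σ B k → A.output p = x → B.output q = y →
      ∃ (M : FST) (r : List Bool), sizeLE σ M k' ∧ M.output r = x ++ y ∧
        (r.length : ℝ) ≤ (1 + ε) * p.length + q.length + 2 := by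
  set b := ⌈2 / ε⌉₊
  have hS := finite_setOf_sizeLE σ k
  obtain ⟨k', hk'⟩ := hσ.exists_sizeLE_of_finite
    ((hS.prod hS).image fun P : FST × FST => (concatMachine b P.1 P.2).toFST)
  refine ⟨k', (eventually_le_length_of_output_eq hS ⌈2 * (b + 1) / ε⌉₊).mono ?_⟩
  rintro x hx y p q A B hA hB rfl rfl
  refine ⟨(concatMachine b A B).toFST, blockEncode b p ++ q,
    hk' _ ⟨(A, B), ⟨hA, hB⟩, rfl⟩, concatMachine_output p q, ?_⟩
  have hp :=
    length_blockEncode_le_one_add_mul hε (Nat.le_ceil _) (Nat.ceil_le.mp (hx A hA p rfl))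
  rw [List.length_append, Nat.cast_add]
  linarith
end
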